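/- arXiv:2410.20977 — 3 statements merged into one kernel-verified Lean document; each statement's English description precedes it below -/
import Mathlib

section
/- Let X, Y be Hilbert spaces, f : X → ℝ be ρ_f-weakly convex, g* : Y → ℝ be convex, L : X → Y bounded linear. Define the Lagrangian 𝓛(x,y) = f(x) + ⟨Lx, y⟩ - g*(y) and the duality gap 𝒢(x,y) = sup over (x̂,ŷ) of [𝓛(x,ŷ) - 𝓛(x̂,y)]. Then 𝒢 is jointly ρ_f-weakly convex on X × Y, i.e., for λ ∈ [0,1] and points (x₁,y₁),(x₂,y₂): 𝒢(λ(x₁,y₁)+(1-λ)(x₂,y₂)) ≤ λ𝒢(x₁,y₁)+(1-λ)𝒢(x₂,y₂)+λ(1-λ)(ρ_f/2)(‖x₁-x₂‖²+‖y₁-y₂‖²). -/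
open scoped RealInnerProductSpace

theorem gap_function_weaklyConvex
    {X Y : Type*} [NormedAddCommGroup X] [InnerProductSpace ℝ X] [CompleteSpace X]
    [NormedAddCommGroup Y] [InnerProductSpace ℝ Y] [CompleteSpace Y]
    (f : X → ℝ) (gstar : Y → ℝ) (L : X →L[ℝ] Y) (ρf : ℝ) (hρf : 0 ≤ ρf)
    (hf : ∀ x y : X, ∀ l : ℝ, l ∈ Set.Icc (0:ℝ) 1 →
      f (l • x + (1 - l) • y) ≤ l * f x + (1 - l) * f y + l * (1 - l) * (ρf / 2) * ‖x - y‖ ^ 2)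
    (hg : ConvexOn ℝ Set.univ gstar)
    (Lag : X → Y → ℝ) (hLag : ∀ x y, Lag x y = f x + ⟪L x, y⟫ - gstar y)
    (G : X → Y → ℝ)
    (hG : ∀ x y, IsLUB {r : ℝ | ∃ p : X × Y, r = Lag x p.2 - Lag p.1 y} (G x y)) :
    ∀ (x₁ x₂ : X) (y₁ y₂ : Y), ∀ l : ℝ, l ∈ Set.Icc (0:ℝ) 1 →
      G (l • x₁ + (1 - l) • x₂) (l • y₁ + (1 - l) • y₂) ≤
        l * G x₁ y₁ + (1 - l) * G x₂ y₂ +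
          l * (1 - l) * (ρf / 2) * (‖x₁ - x₂‖ ^ 2 + ‖y₁ - y₂‖ ^ 2) := by
  rintro x₁ x₂ y₁ y₂ l ⟨hl0, hl1⟩
  have hl1' : 0 ≤ 1 - l := by linarith
  set xm := l • x₁ + (1 - l) • x₂ with hxm
  set ym := l • y₁ + (1 - l) • y₂ with hym
  apply (hG xm ym).2
  rintro r ⟨p, rfl⟩
  have g1 := (hG x₁ y₁).1 ⟨p, rfl⟩
  have g2 := (hG x₂ y₂).1 ⟨p, rfl⟩
  have h1 : Lag xm p.2 - Lag p.1 ym ≤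
      l * (Lag x₁ p.2 - Lag p.1 y₁) + (1 - l) * (Lag x₂ p.2 - Lag p.1 y₂) +
        l * (1 - l) * (ρf / 2) * ‖x₁ - x₂‖ ^ 2 := by
    have hf' := hf x₁ x₂ l ⟨hl0, hl1⟩
    have hg' := hg.2 (Set.mem_univ y₁) (Set.mem_univ y₂) hl0 hl1' (by ring)
    simp only [smul_eq_mul] at hg'
    have hinner1 : ⟪L xm, p.2⟫ = l * ⟪L x₁, p.2⟫ + (1 - l) * ⟪L x₂, p.2⟫ := by
      simp [hxm, map_add, map_smul, inner_add_left, real_inner_smul_left]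
    have hinner2 : ⟪L p.1, ym⟫ = l * ⟪L p.1, y₁⟫ + (1 - l) * ⟪L p.1, y₂⟫ := by
      simp [hym, inner_add_right, real_inner_smul_right]
    simp only [hLag]
    rw [hinner1, hinner2]
    linarith
  have h2 := mul_le_mul_of_nonneg_left g1 hl0
  have h3 := mul_le_mul_of_nonneg_left g2 hl1'
  have h4 : l * (1 - l) * (ρf / 2) * ‖x₁ - x₂‖ ^ 2 ≤
      l * (1 - l) * (ρf / 2) * (‖x₁ - x₂‖ ^ 2 + ‖y₁ - y₂‖ ^ 2) := by
    have hc : 0 ≤ l * (1 - l) * (ρf / 2) := by positivity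
    nlinarith [sq_nonneg ‖y₁ - y₂‖]
  linarith
end

section
/- Let A, μ, M be positive reals with M > A, and suppose nonnegative reals d_n, d_{n+1} satisfy M·d_n² ≥ A·d_{n+1}² + μ·d_{n+1}. If d_n ≤ μ/(M - A), then d_{n+1} ≤ μ/(M - A). -/
theorem one_step_distance_bound
    (A μ M d₁ d₂ : ℝ) (hA : 0 < A) (hμ : 0 < μ) (hM : 0 < M) (hMA : A < M)
    (hd₁ : 0 ≤ d₁) (hd₂ : 0 ≤ d₂)
    (hrec : M * d₁ ^ 2 ≥ A * d₂ ^ 2 + μ * d₂)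
    (hball : d₁ ≤ μ / (M - A)) :
    d₂ ≤ μ / (M - A) := by
  have h : 0 < M - A := by linarith
  rw [le_div_iff₀ h] at hball ⊢
  by_contra hg
  push_neg at hg
  have h1 : d₁ * (M - A) * (d₁ * (M - A)) ≤ μ * μ :=
    mul_le_mul hball hball (mul_nonneg hd₁ h.le) hμ.le
  have h2 : μ * μ < d₂ * (M - A) * (d₂ * (M - A)) := by nlinarith
  nlinarith [mul_le_mul_of_nonneg_left hrec (sq_nonneg (M - A)), mul_lt_mul_of_pos_left hg hμ]
end

section
/- Let A ≥ 0, μ > 0, M > A, and let (d_n) be a sequence of nonnegative reals satisfying M·d_n² ≥ (A + μ/d_{n+1})·d_{n+1}² whenever d_{n+1} > 0 (equivalently M·d_n² ≥ A·d_{n+1}² + μ·d_{n+1}). If d_0 < μ/(M - A), then d_n² ≤ B^{n-1}·d_0² where B = M/(A + μ/d_0) < 1, and hence d_n → 0 as n → ∞. -/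
open Filter

theorem distance_linear_convergence
    (A μ M : ℝ) (hA : 0 ≤ A) (hμ : 0 < μ) (hMA : A < M)
    (d : ℕ → ℝ) (hd : ∀ n, 0 ≤ d n)
    (hrec : ∀ n, M * (d n) ^ 2 ≥ A * (d (n + 1)) ^ 2 + μ * d (n + 1))
    (hd0pos : 0 < d 0) (hball : d 0 < μ / (M - A))
    (B : ℝ) (hB : B = M / (A + μ / d 0)) :
    B < 1 ∧ (∀ n, (d (n + 1)) ^ 2 ≤ B ^ n * (d 0) ^ 2) ∧
      Tendsto d atTop (nhds 0) := by
  have hMA' : 0 < M - A := sub_pos.2 hMA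
  have hball' : d 0 * (M - A) < μ := (lt_div_iff₀ hMA').1 hball
  have hden : 0 < A + μ / d 0 := by positivity
  have hMpos : 0 < M := lt_of_le_of_lt hA hMA
  have hBpos : 0 < B := by rw [hB]; positivity
  have hB1 : B < 1 := by
    rw [hB, div_lt_one hden]
    have h1 : M - A < μ / d 0 := (lt_div_iff₀ hd0pos).2 (by linarith)
    linarith
  -- monotonicity and boundedness
  have key : ∀ n, d (n + 1) ≤ d n ∧ d n ≤ d 0 := by
    intro n
    induction n with
    | zero =>
      refine ⟨?_, le_refl _⟩
      by_contra h
      push_neg at h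
      have hr := hrec 0
      nlinarith [hd 1, hd 0, mul_nonneg hA (sub_nonneg.2 h.le)]
    | succ n ih =>
      have hle : d (n + 1) ≤ d 0 := le_trans ih.1 ih.2
      refine ⟨?_, hle⟩
      by_contra h
      push_neg at h
      have hr := hrec (n + 1)
      have h2 : 0 ≤ A * ((d (n + 2) - d (n + 1)) * (d (n + 2) + d (n + 1))) :=
        mul_nonneg hA (mul_nonneg (sub_nonneg.2 h.le) (add_nonneg (hd _) (hd _)))
      have h3 : (M - A) * d (n + 1) ≤ (M - A) * d 0 :=
        mul_le_mul_of_nonneg_left hle hMA'.le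
      have h4 : (M - A) * d (n + 1) * d (n + 1) ≤ μ * d (n + 1) :=
        mul_le_mul_of_nonneg_right (by linarith) (hd _)
      nlinarith [hd (n + 2), hd (n + 1)]
  -- geometric recursion
  have hgeo : ∀ n, (d (n + 1)) ^ 2 ≤ B * (d n) ^ 2 := by
    intro n
    have hy0 : d (n + 1) ≤ d 0 := le_trans (key n).1 (key n).2
    have hr := hrec n
    have hc : μ / d 0 * d 0 = μ := div_mul_cancel₀ μ (ne_of_gt hd0pos)
    have hcpos : 0 < μ / d 0 := by positivity
    rw [hB, div_mul_eq_mul_div, le_div_iff₀ hden]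
    nlinarith [mul_le_mul_of_nonneg_left hy0 (mul_nonneg hcpos.le (hd (n + 1))),
      hd (n + 1)]
  -- geometric bound
  have hbound : ∀ n, (d (n + 1)) ^ 2 ≤ B ^ n * (d 0) ^ 2 := by
    intro n
    induction n with
    | zero =>
      simpa using pow_le_pow_left₀ (hd 1) (le_trans (key 0).1 (key 0).2) 2
    | succ n ih =>
      calc (d (n + 2)) ^ 2 ≤ B * (d (n + 1)) ^ 2 := hgeo (n + 1)
        _ ≤ B * (B ^ n * (d 0) ^ 2) := by
            exact mul_le_mul_of_nonneg_left ih hBpos.le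
        _ = B ^ (n + 1) * (d 0) ^ 2 := by ring
  refine ⟨hB1, hbound, ?_⟩
  -- convergence
  have hsB : Real.sqrt B < 1 := by
    rw [show (1 : ℝ) = Real.sqrt 1 by simp]
    exact Real.sqrt_lt_sqrt hBpos.le hB1
  have hlim : Tendsto (fun n : ℕ => Real.sqrt B ^ n * d 0) atTop (nhds 0) := by
    have := (tendsto_pow_atTop_nhds_zero_of_lt_one (Real.sqrt_nonneg B) hsB).mul_const (d 0)
    simpa using this
  have hsp : ∀ n : ℕ, Real.sqrt (B ^ n) = Real.sqrt B ^ n := by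
    intro n
    induction n with
    | zero => simp
    | succ n ih =>
      rw [pow_succ, pow_succ, Real.sqrt_mul (pow_nonneg hBpos.le n), ih]
  have hsq : ∀ n : ℕ, d (n + 1) ≤ Real.sqrt B ^ n * d 0 := by
    intro n
    have h1 : d (n + 1) = Real.sqrt ((d (n + 1)) ^ 2) := (Real.sqrt_sq (hd _)).symm
    rw [h1]
    calc Real.sqrt ((d (n + 1)) ^ 2) ≤ Real.sqrt (B ^ n * (d 0) ^ 2) :=
          Real.sqrt_le_sqrt (hbound n)
      _ = Real.sqrt (B ^ n) * Real.sqrt ((d 0) ^ 2) :=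
          Real.sqrt_mul (pow_nonneg hBpos.le n) _
      _ = Real.sqrt B ^ n * d 0 := by
          rw [Real.sqrt_sq (hd 0), hsp]
  have h1 : Tendsto (fun n : ℕ => d (n + 1)) atTop (nhds 0) :=
    squeeze_zero (fun n => hd _) hsq hlim
  exact (tendsto_add_atTop_iff_nat 1).1 h1
end
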